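/- Fix a natural number N ≥ 1 and let h(t) = t² · ∏_{j=1}^N (log^{(j)}(t))² for all t large enough that every iterated logarithm log^{(j)}(√t) (1 ≤ j ≤ N) is positive. Then t·h(√t)/h(t) = ∏_{j=1}^N (log^{(j)}(√t)/log^{(j)}(t))² for such t, this quotient converges to 1/4 as t → +∞, and in particular limsup_{t→+∞} t·h(√t)/h(t) < +∞. -/

import Mathlib

/-!
Since `log^{(1)}(√t) = log t / 2`, the first factor of the quotient is exactly `1/4`. For `j ≥ 1`,
`log^{(j+1)}(√t) = log^{(j+1)}(t) + log (log^{(j)}(√t) / log^{(j)}(t))`, and the last term stays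
bounded while `log^{(j+1)}(t) → ∞`; hence every further factor tends to `1`.
-/

open Filter

/-- Iterated logarithm: `iterLog 0 = id`, `iterLog (j+1) = log ∘ iterLog j`,
so that `iterLog j` for `j ≥ 1` is the `j`-th iterated logarithm `log^{(j)}`. -/
noncomputable def iterLog : ℕ → ℝ → ℝ
  | 0, t => t
  | j + 1, t => Real.log (iterLog j t)

open Topology

lemma tendsto_iterLog_atTop (j : ℕ) : Tendsto (iterLog j) atTop atTop := by
  induction j with
  | zero => exact tendsto_id
  | succ j ih => exact Real.tendsto_log_atTop.comp ih

lemma iterLog_le_iterLog {x y : ℝ} (hxy : x ≤ y) :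
    ∀ {j : ℕ}, (∀ i < j, 0 < iterLog i x) → iterLog j x ≤ iterLog j y
  | 0, _ => hxy
  | j + 1, hx =>
    Real.log_le_log (hx j j.lt_succ_self)
      (iterLog_le_iterLog hxy fun i hi => hx i (hi.trans j.lt_succ_self))

lemma tendsto_log_div_log_of_tendsto_div {α : Type*} {l : Filter α} {f g : α → ℝ} {r : ℝ}
    (hr : 0 < r) (hg : Tendsto g l atTop) (hfg : Tendsto (fun x => f x / g x) l (𝓝 r)) :
    Tendsto (fun x => Real.log (f x) / Real.log (g x)) l (𝓝 1) := by
  have hg_pos : ∀ᶠ x in l, 0 < g x := hg.eventually_gt_atTop 0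
  have hf_pos : ∀ᶠ x in l, 0 < f x := by
    filter_upwards [hg_pos, hfg.eventually (lt_mem_nhds hr)] with x hgx hfgx
    exact (div_pos_iff_of_pos_right hgx).1 hfgx
  have hlog_ne : ∀ᶠ x in l, Real.log (g x) ≠ 0 :=
    (Real.tendsto_log_atTop.comp hg).eventually_ne_atTop 0
  have hsplit : ∀ᶠ x in l, Real.log (f x / g x) / Real.log (g x) + 1
      = Real.log (f x) / Real.log (g x) := by
    filter_upwards [hf_pos, hg_pos, hlog_ne] with x hfx hgx hlx
    rw [Real.log_div hfx.ne' hgx.ne']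
    field_simp
    ring
  have hsmall : Tendsto (fun x => Real.log (f x / g x) / Real.log (g x)) l (𝓝 0) :=
    ((Real.continuousAt_log hr.ne').tendsto.comp hfg).div_atTop
      (Real.tendsto_log_atTop.comp hg)
  simpa using (hsmall.add_const 1).congr' hsplit

lemma tendsto_iterLog_sqrt_div_iterLog {j : ℕ} (hj : 1 ≤ j) :
    Tendsto (fun t => iterLog j (Real.sqrt t) / iterLog j t) atTop
      (𝓝 (if j = 1 then 1 / 2 else 1)) := by
  induction j, hj using Nat.le_induction with
  | base =>
    rw [if_pos rfl]
    refine tendsto_const_nhds.congr' ?_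
    filter_upwards [eventually_gt_atTop 1] with t ht
    have hlog : Real.log t ≠ 0 := (Real.log_pos ht).ne'
    simp only [iterLog, Real.log_sqrt (zero_le_one.trans ht.le)]
    field_simp
  | succ j hj ih =>
    rw [if_neg (by omega)]
    refine tendsto_log_div_log_of_tendsto_div (by split_ifs <;> norm_num)
      (tendsto_iterLog_atTop j) ih

lemma mul_sq_sqrt_mul_prod_div {ι : Type*} (s : Finset ι) (a b : ι → ℝ) {t : ℝ} (ht : 0 < t)
    (hb : ∀ j ∈ s, b j ≠ 0) :
    t * (Real.sqrt t ^ 2 * ∏ j ∈ s, a j ^ 2) / (t ^ 2 * ∏ j ∈ s, b j ^ 2)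
      = ∏ j ∈ s, (a j / b j) ^ 2 := by
  have hprod : ∏ j ∈ s, b j ^ 2 ≠ 0 :=
    Finset.prod_ne_zero_iff.2 fun j hj => pow_ne_zero 2 (hb j hj)
  rw [Real.sq_sqrt ht.le]
  simp only [div_pow, Finset.prod_div_distrib]
  field_simp

lemma iterLog_pos_of_iterLog_sqrt_pos {N : ℕ} {t : ℝ} (hN : 1 ≤ N)
    (hpos : ∀ j : ℕ, 1 ≤ j → j ≤ N → 0 < iterLog j (Real.sqrt t)) {j : ℕ} (hj : j ≤ N) :
    0 < iterLog j t := by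
  have hsqrt : 1 < Real.sqrt t := (Real.log_pos_iff (Real.sqrt_nonneg t)).1 (hpos 1 le_rfl hN)
  have hsqrt_pos : ∀ i ≤ N, 0 < iterLog i (Real.sqrt t)
    | 0, _ => zero_lt_one.trans hsqrt
    | i + 1, hi => hpos (i + 1) i.succ_pos hi
  have ht : 1 < t := by simpa using (Real.lt_sqrt zero_le_one).1 hsqrt
  have hle : Real.sqrt t ≤ t := Real.sqrt_le_self_iff.2 (Or.inr ht.le)
  exact (hsqrt_pos j hj).trans_le (iterLog_le_iterLog hle fun i hi => hsqrt_pos i (by omega))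

lemma tendsto_prod_iterLog_sqrt_div_iterLog {N : ℕ} (hN : 1 ≤ N) :
    Tendsto (fun t => ∏ j ∈ Finset.Icc 1 N, (iterLog j (Real.sqrt t) / iterLog j t) ^ 2) atTop
      (𝓝 (1 / 4)) := by
  have hprod := tendsto_finsetProd (Finset.Icc 1 N) fun j hj =>
    (tendsto_iterLog_sqrt_div_iterLog (Finset.mem_Icc.1 hj).1).pow 2
  simp only [ite_pow, one_pow, Finset.prod_ite_eq', Finset.mem_Icc, le_refl, hN, and_self,
    if_true] at hprod
  exact (by norm_num : ((1 : ℝ) / 2) ^ 2 = 1 / 4) ▸ hprod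

/-- for `h(t) = t²·∏_{j=1}^N (log^{(j)}(t))²` one has
`t·h(√t)/h(t) = ∏_{j=1}^N (log^{(j)}(√t)/log^{(j)}(t))²` whenever every
`log^{(j)}(√t)` (`1 ≤ j ≤ N`) is positive, this quotient tends to `1/4` as
`t → +∞`, and in particular `limsup_{t→+∞} t·h(√t)/h(t) < +∞`. -/
theorem iterLog_h_quotient (N : ℕ) (hN : 1 ≤ N)
    (h : ℝ → ℝ)
    (hdef : ∀ t : ℝ, h t = t ^ 2 * ∏ j ∈ Finset.Icc 1 N, (iterLog j t) ^ 2) :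
    (∀ t : ℝ, (∀ j : ℕ, 1 ≤ j → j ≤ N → 0 < iterLog j (Real.sqrt t)) →
        t * h (Real.sqrt t) / h t
          = ∏ j ∈ Finset.Icc 1 N, (iterLog j (Real.sqrt t) / iterLog j t) ^ 2) ∧
    Tendsto (fun t : ℝ => t * h (Real.sqrt t) / h t) atTop (nhds (1 / 4)) ∧
    Filter.limsup (fun t : ℝ => ((t * h (Real.sqrt t) / h t : ℝ) : EReal)) atTop < ⊤ := by
  have hquot : ∀ t : ℝ, (∀ j : ℕ, 1 ≤ j → j ≤ N → 0 < iterLog j (Real.sqrt t)) →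
      t * h (Real.sqrt t) / h t
        = ∏ j ∈ Finset.Icc 1 N, (iterLog j (Real.sqrt t) / iterLog j t) ^ 2 := by
    intro t hpos
    rw [hdef, hdef]
    exact mul_sq_sqrt_mul_prod_div _ _ _ (iterLog_pos_of_iterLog_sqrt_pos hN hpos N.zero_le)
      fun j hj => (iterLog_pos_of_iterLog_sqrt_pos hN hpos (Finset.mem_Icc.1 hj).2).ne'
  have hsqrt_pos : ∀ᶠ t in atTop, ∀ j ∈ Finset.Icc 1 N, 0 < iterLog j (Real.sqrt t) :=
    (eventually_all_finset _).2 fun j _ =>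
      ((tendsto_iterLog_atTop j).comp Real.tendsto_sqrt_atTop).eventually_gt_atTop 0
  have hlim : Tendsto (fun t : ℝ => t * h (Real.sqrt t) / h t) atTop (𝓝 (1 / 4)) := by
    refine (tendsto_prod_iterLog_sqrt_div_iterLog hN).congr' ?_
    filter_upwards [hsqrt_pos] with t ht
    exact (hquot t fun j hj1 hjN => ht j (Finset.mem_Icc.2 ⟨hj1, hjN⟩)).symm
  refine ⟨hquot, hlim, ?_⟩
  exact (((continuous_coe_real_ereal.tendsto _).comp hlim).limsup_eq).trans_lt
    (EReal.coe_lt_top _)
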